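/- Fixed-budget multiple-issue QV fails the no-favourite-betrayal criterion: let N = {1,2}, Ω = {ω, φ, ψ}, budget B = 16, agent 1's utilities u¹ = (0, 900, 910) (so ψ is 1's sincere favourite), and agent 2's fixed ballot v² = (10, 7, −100). Then: (a) there is no ballot σ ∈ ℤ³ with σ_ω² + σ_φ² + σ_ψ² ≤ 16 under which ψ is a possible winner (i.e., with −100+σ_ψ ≥ 10+σ_ω and −100+σ_ψ ≥ 7+σ_φ); and (b) the ballot σ = (0, 4, 0) costs exactly 16 ≤ B and makes φ the unique winner, giving agent 1 utility 900. Hence agent 1's best affordable response rates φ strictly ahead of its favourite ψ. -/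
import Mathlib


/-- Agent 1's utility in the fixed-budget QV election with `u¹ = (0, 900, 910)` and
agent 2's fixed ballot `v² = (10, 7, −100)`: the expected utility of the
possible-winner set, each member elected with probability `1/|W|`. -/
noncomputable def qvUtil5 (σ : Fin 3 → ℤ) : ℝ :=
  letI u : Fin 3 → ℝ := ![0, 900, 910]
  letI t : Fin 3 → ℤ := fun γ => ![10, 7, -100] γ + σ γ
  letI W : Finset (Fin 3) := Finset.univ.filter (fun γ => ∀ δ : Fin 3, t δ ≤ t γ)
  (W.card : ℝ)⁻¹ * (∑ γ ∈ W, u γ)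

/-- Fixed-budget multiple-issue QV fails no-favourite-betrayal: with budget `B = 16`,
`u¹ = (0,900,910)` (sincere favourite `ψ = 2`) and `v² = (10,7,−100)`, (a) no
budget-feasible ballot makes `ψ` a possible winner; (b) the ballot `(0,4,0)` costs
exactly `16 ≤ B`, makes `φ = 1` the unique winner, and gives agent 1 utility `900`.
Hence agent 1's best affordable response rates `φ` strictly ahead of `ψ`. -/
theorem qv_fixed_budget_favourite_betrayal :
    (∀ σ : Fin 3 → ℤ, (∑ γ : Fin 3, (σ γ) ^ 2) ≤ 16 →
      ¬(10 + σ 0 ≤ -100 + σ 2 ∧ 7 + σ 1 ≤ -100 + σ 2)) ∧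
    (letI σ : Fin 3 → ℤ := ![0, 4, 0]
     (∑ γ : Fin 3, (σ γ) ^ 2) = 16 ∧
     (∀ δ : Fin 3, δ ≠ 1 →
        ![10, 7, -100] δ + σ δ < ![10, 7, (-100 : ℤ)] 1 + σ 1) ∧
     qvUtil5 σ = 900) := by
  constructor
  · intro σ hb ⟨h1, h2⟩
    rw [Fin.sum_univ_three] at hb
    nlinarith [sq_nonneg (σ 0 + σ 2), sq_nonneg (σ 1), sq_nonneg (σ 2 - σ 0 - 110)]
  · refine ⟨by decide, ?_, ?_⟩
    · intro δ hδ
      fin_cases δ <;> simp_all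
    · have hW : (Finset.univ.filter
          (fun γ : Fin 3 => ∀ δ : Fin 3, (![10, 7, -100] δ + ![0, 4, 0] δ : ℤ) ≤
            ![10, 7, -100] γ + ![0, 4, 0] γ)) = {1} := by decide
      unfold qvUtil5
      rw [hW]
      norm_num
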